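/- Let p_n denote the number of tagged partitions of {1,…,n} (with p_0 = 1). Then the exponential generating function of (p_n) satisfies ∑_{n=0}^∞ p_n x^n/n! = exp((exp(2x) − 1 + 2x)/2) as formal power series over ℚ. -/

import Mathlib

/-- A tagged partition of `{1,…,n}` (modeled as `Fin n`): a partition into nonempty
classes together with a partial involution on the classes having at most one fixed point.
The partial involution is encoded by `star`, with `star P = none` meaning `*` is
undefined at `P` (in particular `star P = none` for any `P` that is not a class). -/
structure TaggedPartition (n : ℕ) where
  classes : Set (Set (Fin n))
  classes_nonempty : ∀ P ∈ classes, P.Nonempty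
  cover : ∀ i : Fin n, ∃ P ∈ classes, i ∈ P
  eq_of_inter : ∀ P ∈ classes, ∀ Q ∈ classes, (P ∩ Q).Nonempty → P = Q
  star : Set (Fin n) → Option (Set (Fin n))
  star_dom : ∀ P, star P ≠ none → P ∈ classes
  star_ran : ∀ P Q, star P = some Q → Q ∈ classes
  star_invol : ∀ P Q, star P = some Q → star Q = some P
  star_fixed : ∀ P Q, star P = some P → star Q = some Q → P = Q

/-- The polydiagonal subspace `Δ_tp ⊆ ℝⁿ` of a tagged partition:
`x_i = x_j` whenever `[i] = [j]`, and `x_i = -x_j` whenever `[i]* = [j]`. -/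
def TaggedPartition.polydiag {n : ℕ} (tp : TaggedPartition n) : Set (Fin n → ℝ) :=
  {x | (∀ P ∈ tp.classes, ∀ i ∈ P, ∀ j ∈ P, x i = x j) ∧
       (∀ P Q, tp.star P = some Q → ∀ i ∈ P, ∀ j ∈ Q, x i = - x j)}

/-- `Δ_tp` is a synchrony subspace: the partial involution is the empty function. -/
def TaggedPartition.IsSynchrony {n : ℕ} (tp : TaggedPartition n) : Prop :=
  ∀ P, tp.star P = none

/-- Fully tagged: the partial involution is defined on every class. -/
def TaggedPartition.FullyTagged {n : ℕ} (tp : TaggedPartition n) : Prop :=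
  ∀ P ∈ tp.classes, tp.star P ≠ none

/-- Evenly tagged: fully tagged and `#P = #P*` for every class `P`. -/
def TaggedPartition.EvenlyTagged {n : ℕ} (tp : TaggedPartition n) : Prop :=
  tp.FullyTagged ∧ ∀ P Q, tp.star P = some Q → P.ncard = Q.ncard

open PowerSeries in
/-- The exponential `exp(A) = ∑_k A^k / k!` of a formal power series `A` over `ℚ`
with zero constant term (the coefficient formula below is the correct one in that
case, since then `A^k` contributes nothing to the `n`-th coefficient for `k > n`). -/
noncomputable def pexp (A : PowerSeries ℚ) : PowerSeries ℚ :=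
  PowerSeries.mk fun n =>
    ∑ k ∈ Finset.range (n + 1), (PowerSeries.coeff n (A ^ k)) / (Nat.factorial k : ℚ)


/-!
Let `p_n` and `q_n` count the tagged partitions of an `n`-set, all of them and those without a
fixed class. Splitting off the fixed class `F` (empty if there is none) leaves a tagged partition
without fixed class of the complement, so `p_n = ∑ C(n,j) q_{n-j}`. In one without fixed class,
removing the class `P` of a chosen element and declaring `P*` (if defined) the fixed class leaves
an arbitrary tagged partition of the complement of `P`, so `q_{n+1} = ∑ C(n,k) p_{n-k}`. For the
exponential generating functions this reads `P = eˣ Q` and `Q' = eˣ P`, hence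
`P' = (e^{2x} + 1) P` with `P(0) = 1`. By the chain rule `exp A`, `A = (e^{2x} - 1 + 2x)/2`,
solves the same linear equation, whose solution is unique.
-/

open Set

/-- A tagged partition of its support `⋃₀ classes`. Leaving the ground set free lets families be
restricted to subfamilies and glued along disjoint supports. -/
@[ext]
structure TaggedFamily (α : Type*) where
  classes : Set (Set α)
  classes_nonempty : ∀ P ∈ classes, P.Nonempty
  eq_of_inter : ∀ P ∈ classes, ∀ Q ∈ classes, (P ∩ Q).Nonempty → P = Q
  star : Set α → Option (Set α)
  star_dom : ∀ P, star P ≠ none → P ∈ classes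
  star_ran : ∀ P Q, star P = some Q → Q ∈ classes
  star_invol : ∀ P Q, star P = some Q → star Q = some P
  star_fixed : ∀ P Q, star P = some P → star Q = some Q → P = Q

namespace TaggedFamily

variable {α : Type*}

def support (t : TaggedFamily α) : Set α := ⋃₀ t.classes

def NoFixed (t : TaggedFamily α) : Prop := ∀ P, t.star P ≠ some P

theorem ext_of_star_eq_some {t u : TaggedFamily α} (hc : t.classes = u.classes)
    (hs : ∀ P Q, t.star P = some Q ↔ u.star P = some Q) : t = u :=
  TaggedFamily.ext hc (funext fun P => Option.ext (hs P))

theorem mem_classes_of_star_eq_some (t : TaggedFamily α) {P Q : Set α}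
    (h : t.star P = some Q) : P ∈ t.classes :=
  t.star_dom P (by simp [h])

theorem star_eq_none_of_notMem (t : TaggedFamily α) {P : Set α} (h : P ∉ t.classes) :
    t.star P = none := by
  by_contra h'
  exact h (t.star_dom P h')

theorem subset_support (t : TaggedFamily α) {P : Set α} (hP : P ∈ t.classes) :
    P ⊆ t.support :=
  subset_sUnion_of_mem hP

theorem ne_of_mem_classes_of_disjoint {t u : TaggedFamily α} (h : Disjoint t.support u.support)
    {P Q : Set α} (hP : P ∈ t.classes) (hQ : Q ∈ u.classes) : P ≠ Q := by
  rintro rfl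
  obtain ⟨x, hx⟩ := t.classes_nonempty P hP
  exact h.ne_of_mem (t.subset_support hP hx) (u.subset_support hQ hx) rfl

instance [Finite α] : Finite (TaggedFamily α) :=
  Finite.of_injective (fun t => (t.classes, t.star)) fun t u h => by
    simp only [Prod.mk.injEq] at h
    exact TaggedFamily.ext h.1 h.2

open scoped Classical in
noncomputable def restrict (t : TaggedFamily α) (D : Set (Set α)) : TaggedFamily α where
  classes := t.classes ∩ D
  classes_nonempty P hP := t.classes_nonempty P hP.1
  eq_of_inter P hP Q hQ := t.eq_of_inter P hP.1 Q hQ.1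
  star P := (t.star P).filter fun Q => P ∈ D ∧ Q ∈ D
  star_dom P h := by
    obtain ⟨Q, hQ⟩ := Option.ne_none_iff_exists'.1 h
    simp only [Option.filter_eq_some_iff, decide_eq_true_eq] at hQ
    exact ⟨t.mem_classes_of_star_eq_some hQ.1, hQ.2.1⟩
  star_ran P Q h := by
    simp only [Option.filter_eq_some_iff, decide_eq_true_eq] at h
    exact ⟨t.star_ran P Q h.1, h.2.2⟩
  star_invol P Q h := by
    simp only [Option.filter_eq_some_iff, decide_eq_true_eq] at h ⊢
    exact ⟨t.star_invol P Q h.1, h.2.2, h.2.1⟩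
  star_fixed P Q hP hQ := by
    simp only [Option.filter_eq_some_iff] at hP hQ
    exact t.star_fixed P Q hP.1 hQ.1

@[simp]
theorem classes_restrict (t : TaggedFamily α) (D : Set (Set α)) :
    (t.restrict D).classes = t.classes ∩ D := rfl

@[simp]
theorem star_restrict_eq_some (t : TaggedFamily α) (D : Set (Set α)) {P Q : Set α} :
    (t.restrict D).star P = some Q ↔ t.star P = some Q ∧ P ∈ D ∧ Q ∈ D := by
  simp [restrict]

def union (t u : TaggedFamily α) (h : Disjoint t.support u.support)
    (hfix : t.NoFixed ∨ u.NoFixed) : TaggedFamily α where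
  classes := t.classes ∪ u.classes
  classes_nonempty := by
    rintro P (hP | hP)
    exacts [t.classes_nonempty P hP, u.classes_nonempty P hP]
  eq_of_inter := by
    rintro P (hP | hP) Q (hQ | hQ) ⟨x, hxP, hxQ⟩
    · exact t.eq_of_inter P hP Q hQ ⟨x, hxP, hxQ⟩
    · exact absurd rfl (h.ne_of_mem (t.subset_support hP hxP) (u.subset_support hQ hxQ))
    · exact absurd rfl (h.ne_of_mem (t.subset_support hQ hxQ) (u.subset_support hP hxP))
    · exact u.eq_of_inter P hP Q hQ ⟨x, hxP, hxQ⟩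
  star P := (t.star P).or (u.star P)
  star_dom P hP := by
    by_cases ht : t.star P = none
    · exact Or.inr (u.star_dom P (by simpa [ht] using hP))
    · exact Or.inl (t.star_dom P ht)
  star_ran P Q hPQ := by
    rcases Option.or_eq_some_iff.1 hPQ with hPQ | ⟨-, hPQ⟩
    exacts [Or.inl (t.star_ran P Q hPQ), Or.inr (u.star_ran P Q hPQ)]
  star_invol P Q hPQ := by
    rcases Option.or_eq_some_iff.1 hPQ with hPQ | ⟨-, hPQ⟩
    · simp [t.star_invol P Q hPQ]
    · have hQ : Q ∉ t.classes := fun hQ =>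
        ne_of_mem_classes_of_disjoint h hQ (u.star_ran P Q hPQ) rfl
      simp [t.star_eq_none_of_notMem hQ, u.star_invol P Q hPQ]
  star_fixed P Q hP hQ := by
    rcases Option.or_eq_some_iff.1 hP with hP | ⟨-, hP⟩ <;>
      rcases Option.or_eq_some_iff.1 hQ with hQ | ⟨-, hQ⟩
    · exact t.star_fixed P Q hP hQ
    · exact hfix.elim (absurd hP <| · P) (absurd hQ <| · Q)
    · exact hfix.elim (absurd hQ <| · Q) (absurd hP <| · P)
    · exact u.star_fixed P Q hP hQ

section union

variable {t u : TaggedFamily α} {h : Disjoint t.support u.support} {hfix : t.NoFixed ∨ u.NoFixed}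

@[simp]
theorem classes_union : (t.union u h hfix).classes = t.classes ∪ u.classes := rfl

@[simp]
theorem star_union_eq_some {P Q : Set α} :
    (t.union u h hfix).star P = some Q ↔ t.star P = some Q ∨ u.star P = some Q := by
  refine Option.or_eq_some_iff.trans (or_congr_right ⟨And.right, fun hPQ => ⟨?_, hPQ⟩⟩)
  exact t.star_eq_none_of_notMem fun hP =>
    ne_of_mem_classes_of_disjoint h hP (u.mem_classes_of_star_eq_some hPQ) rfl

theorem support_union : (t.union u h hfix).support = t.support ∪ u.support :=
  sUnion_union _ _

end union

open scoped Classical in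
/-- The family `{P, R}` with `P* = R`; it degenerates to a single fixed class when `P = R`, and to
the single untagged class `P` when `R = ∅`. -/
noncomputable def pair (P R : Set α) (h : P = R ∨ Disjoint P R) : TaggedFamily α where
  classes := {X | (X = P ∨ X = R) ∧ X.Nonempty}
  classes_nonempty X hX := hX.2
  eq_of_inter := by
    rintro X ⟨rfl | rfl, -⟩ Y ⟨rfl | rfl, -⟩ hXY
    all_goals first
      | rfl
      | exact h.resolve_right hXY.not_disjoint
      | exact (h.resolve_right (inter_comm X Y ▸ hXY).not_disjoint).symm
  star X := if P.Nonempty ∧ R.Nonempty then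
    (if X = P then some R else if X = R then some P else none) else none
  star_dom X hX := by
    split_ifs at hX with hne hXP hXR
    exacts [⟨Or.inl hXP, hXP ▸ hne.1⟩, ⟨Or.inr hXR, hXR ▸ hne.2⟩, absurd rfl hX,
      absurd rfl hX]
  star_ran X Y hXY := by
    split_ifs at hXY with hne hXP hXR <;> cases hXY
    exacts [⟨Or.inr rfl, hne.2⟩, ⟨Or.inl rfl, hne.1⟩]
  star_invol X Y hXY := by
    split_ifs at hXY with hne hXP hXR <;> cases hXY <;> grind
  star_fixed X Y hX hY := by
    split_ifs at hX hY <;> grind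

@[simp]
theorem classes_pair {P R : Set α} {h : P = R ∨ Disjoint P R} :
    (pair P R h).classes = {X | (X = P ∨ X = R) ∧ X.Nonempty} := rfl

@[simp]
theorem star_pair_eq_some {P R : Set α} {h : P = R ∨ Disjoint P R} {X Y : Set α} :
    (pair P R h).star X = some Y ↔
      P.Nonempty ∧ R.Nonempty ∧ (X = P ∧ Y = R ∨ X = R ∧ Y = P) := by
  simp only [pair]
  split_ifs <;> grind

theorem support_pair {P R : Set α} {h : P = R ∨ Disjoint P R} :
    (pair P R h).support = P ∪ R := by
  ext x
  simp only [support, pair, mem_sUnion, mem_ofPred_eq, mem_union]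
  constructor
  · rintro ⟨X, ⟨rfl | rfl, -⟩, hx⟩ <;> simp [hx]
  · rintro (hx | hx)
    exacts [⟨P, ⟨Or.inl rfl, x, hx⟩, hx⟩, ⟨R, ⟨Or.inr rfl, x, hx⟩, hx⟩]

theorem noFixed_pair {P R : Set α} {h : P = R ∨ Disjoint P R} (hPR : P ≠ R) :
    (pair P R h).NoFixed := by
  intro X hX
  rw [star_pair_eq_some] at hX
  grind

theorem noFixed_union {t u : TaggedFamily α} {h hfix} (ht : t.NoFixed) (hu : u.NoFixed) :
    (t.union u h hfix).NoFixed := fun P hP =>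
  (star_union_eq_some.1 hP).elim (ht P) (hu P)

theorem support_restrict_compl (t : TaggedFamily α) (D : Set (Set α)) :
    (t.restrict Dᶜ).support = t.support \ (t.restrict D).support := by
  ext x
  simp only [support, classes_restrict, mem_sUnion, mem_inter_iff, mem_compl_iff, mem_sdiff,
    not_exists, not_and]
  constructor
  · rintro ⟨P, ⟨hP, hPD⟩, hx⟩
    refine ⟨⟨P, hP, hx⟩, fun Q ⟨hQ, hQD⟩ hxQ => hPD ?_⟩
    rwa [t.eq_of_inter P hP Q hQ ⟨x, hx, hxQ⟩]
  · rintro ⟨⟨P, hP, hx⟩, hD⟩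
    exact ⟨P, ⟨hP, fun hPD => hD P ⟨hP, hPD⟩ hx⟩, hx⟩

theorem support_restrict_subset (t : TaggedFamily α) (D : Set (Set α)) :
    (t.restrict D).support ⊆ t.support :=
  sUnion_mono inter_subset_left

theorem union_restrict_compl {t : TaggedFamily α} {D : Set (Set α)}
    (hD : ∀ P Q, t.star P = some Q → P ∈ D → Q ∈ D) {b : TaggedFamily α}
    (hb : t.restrict D = b) {h hfix} : b.union (t.restrict Dᶜ) h hfix = t := by
  subst hb
  refine ext_of_star_eq_some (by simp [inter_union_compl]) fun P Q => ?_
  have hPQ : t.star P = some Q → (P ∈ D ↔ Q ∈ D) := fun hPQ =>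
    ⟨hD P Q hPQ, hD Q P (t.star_invol P Q hPQ)⟩
  simp only [star_union_eq_some, star_restrict_eq_some, mem_compl_iff]
  grind

theorem restrict_compl_classes_union {b u : TaggedFamily α} {h hfix} :
    (b.union u h hfix).restrict b.classesᶜ = u := by
  have hu : ∀ P ∈ u.classes, P ∉ b.classes := fun P hP hPb =>
    ne_of_mem_classes_of_disjoint h hPb hP rfl
  refine ext_of_star_eq_some ?_ fun P Q => ?_
  · ext P
    simp only [classes_restrict, classes_union, mem_inter_iff, mem_union, mem_compl_iff]
    grind
  · simp only [star_restrict_eq_some, star_union_eq_some, mem_compl_iff]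
    have := b.mem_classes_of_star_eq_some (P := P) (Q := Q)
    have := u.mem_classes_of_star_eq_some (P := P) (Q := Q)
    have := u.star_ran P Q
    grind

theorem eq_pair_empty_of_support_eq_empty {t : TaggedFamily α} (ht : t.support = ∅) :
    t = pair ∅ ∅ (Or.inl rfl) := by
  have hcl : t.classes = ∅ := eq_empty_of_forall_notMem fun P hP =>
    (t.classes_nonempty P hP).ne_empty (subset_empty_iff.1 (ht ▸ t.subset_support hP))
  refine ext_of_star_eq_some ?_ fun P Q => ?_
  · ext X
    simp only [hcl, classes_pair, or_self, mem_empty_iff_false, mem_ofPred_eq, false_iff, not_and]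
    rintro rfl
    exact Set.not_nonempty_empty
  · simp only [star_pair_eq_some, Set.not_nonempty_empty, false_and, iff_false]
    exact fun hPQ => hcl.subset (t.mem_classes_of_star_eq_some hPQ)

def fixedClasses (t : TaggedFamily α) : Set (Set α) := {P | t.star P = some P}

abbrev TaggedOn (S : Set α) := {t : TaggedFamily α // t.support = S}

abbrev NoFixedOn (S : Set α) := {t : TaggedFamily α // t.support = S ∧ t.NoFixed}

theorem restrict_fixedClasses (t : TaggedFamily α) :
    t.restrict t.fixedClasses =
      pair (⋃₀ t.fixedClasses) (⋃₀ t.fixedClasses) (Or.inl rfl) := by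
  by_cases hC : ∃ C, t.star C = some C
  · obtain ⟨C, hC⟩ := hC
    have hfix : t.fixedClasses = {C} := by
      ext P
      exact ⟨fun hP => t.star_fixed P C hP hC, fun hP => hP ▸ hC⟩
    have hCt : C ∈ t.classes := t.mem_classes_of_star_eq_some hC
    rw [hfix, sUnion_singleton]
    refine ext_of_star_eq_some ?_ fun P Q => ?_
    · ext P
      simp only [classes_restrict, pair, mem_inter_iff, mem_singleton_iff, mem_ofPred_eq, or_self]
      exact ⟨fun hP => ⟨hP.2, hP.2 ▸ t.classes_nonempty P hP.1⟩,
        fun hP => ⟨hP.1 ▸ hCt, hP.1⟩⟩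
    · simp only [star_restrict_eq_some, star_pair_eq_some, mem_singleton_iff]
      have := t.classes_nonempty C hCt
      grind
  · push Not at hC
    rw [show t.fixedClasses = ∅ from eq_empty_of_forall_notMem hC, sUnion_empty]
    exact eq_pair_empty_of_support_eq_empty (by simp [support])

theorem noFixed_restrict_compl_fixedClasses (t : TaggedFamily α) :
    (t.restrict t.fixedClassesᶜ).NoFixed := fun P hP => by
  rw [star_restrict_eq_some] at hP
  exact hP.2.1 hP.1

theorem fixedClasses_pair_union {s : Set α} {u : TaggedFamily α} (hu : u.NoFixed) {h hfix} :
    ((pair s s (Or.inl rfl)).union u h hfix).fixedClasses = (pair s s (Or.inl rfl)).classes := by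
  ext X
  simp only [fixedClasses, classes_pair, mem_ofPred_eq, star_union_eq_some, star_pair_eq_some]
  have := hu X
  grind

theorem fixedClasses_closed (t : TaggedFamily α) {P Q : Set α} (hPQ : t.star P = some Q)
    (hP : P ∈ t.fixedClasses) : Q ∈ t.fixedClasses := by
  rwa [Option.some_inj.1 (hPQ.symm.trans hP)]

theorem sUnion_fixedClasses_subset (t : TaggedFamily α) : ⋃₀ t.fixedClasses ⊆ t.support := by
  have := support_restrict_subset t t.fixedClasses
  rwa [restrict_fixedClasses, support_pair, union_self] at this

theorem support_restrict_compl_fixedClasses (t : TaggedFamily α) :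
    (t.restrict t.fixedClassesᶜ).support = t.support \ ⋃₀ t.fixedClasses := by
  rw [support_restrict_compl, restrict_fixedClasses, support_pair, union_self]

theorem support_pair_union {P R : Set α} {u : TaggedFamily α} {hPR h hfix} :
    ((pair P R hPR).union u h hfix).support = P ∪ R ∪ u.support := by
  rw [support_union, support_pair]

/-- `s = ∅` when there is no fixed class. -/
noncomputable def splitFixedClass (S : Set α) :
    TaggedOn S ≃ Σ s : {s : Set α // s ⊆ S}, NoFixedOn (S \ s) where
  toFun t := ⟨⟨⋃₀ t.1.fixedClasses, (sUnion_fixedClasses_subset t.1).trans t.2.subset⟩,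
    ⟨t.1.restrict t.1.fixedClassesᶜ,
      (support_restrict_compl_fixedClasses t.1).trans (congrArg (· \ _) t.2),
      noFixed_restrict_compl_fixedClasses t.1⟩⟩
  invFun x := ⟨(pair x.1 x.1 (Or.inl rfl)).union x.2.1
      (by rw [support_pair, union_self, x.2.2.1]; exact disjoint_sdiff_right) (Or.inr x.2.2.2),
    by rw [support_pair_union, union_self, x.2.2.1,
      union_sdiff_cancel x.1.2]⟩
  left_inv t := by
    apply Subtype.ext
    dsimp only
    exact union_restrict_compl (fun _ _ => t.1.fixedClasses_closed) (restrict_fixedClasses t.1)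
  right_inv x := by
    obtain ⟨⟨s, hs⟩, u, hu, hufix⟩ := x
    dsimp only
    have hdisj : Disjoint (pair s s (Or.inl rfl)).support u.support := by
      rw [support_pair, union_self, hu]; exact disjoint_sdiff_right
    have hfixed := fixedClasses_pair_union hufix (h := hdisj) (hfix := Or.inr hufix)
    refine Sigma.subtype_ext (Subtype.ext ?_) ?_
    · change (⋃₀ _ : Set α) = s
      rw [hfixed]
      exact (support_pair).trans (union_self s)
    · change restrict _ _ = u
      rw [hfixed]
      exact restrict_compl_classes_union

def classOf (t : TaggedFamily α) (a : α) : Set α := ⋃₀ {P ∈ t.classes | a ∈ P}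

/-- The class `P*`, or `∅` where `*` is undefined. -/
def mate (t : TaggedFamily α) (P : Set α) : Set α := ⋃₀ {Q | t.star P = some Q}

def starOrbit (t : TaggedFamily α) (P : Set α) : Set (Set α) := {Q | Q = P ∨ t.star P = some Q}

theorem classOf_eq (t : TaggedFamily α) {a : α} {P : Set α} (hP : P ∈ t.classes)
    (ha : a ∈ P) : t.classOf a = P := by
  have : {Q ∈ t.classes | a ∈ Q} = {P} := by
    ext Q
    exact ⟨fun hQ => t.eq_of_inter Q hQ.1 P hP ⟨a, hQ.2, ha⟩, fun hQ => hQ ▸ ⟨hP, ha⟩⟩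
  rw [classOf, this, sUnion_singleton]

theorem classOf_mem_classes (t : TaggedFamily α) {a : α} (ha : a ∈ t.support) :
    t.classOf a ∈ t.classes ∧ a ∈ t.classOf a := by
  obtain ⟨P, hP, haP⟩ := ha
  rw [t.classOf_eq hP haP]
  exact ⟨hP, haP⟩

theorem mate_eq (t : TaggedFamily α) {P Q : Set α} (h : t.star P = some Q) : t.mate P = Q := by
  simp [mate, h]

theorem mate_eq_empty (t : TaggedFamily α) {P : Set α} (h : t.star P = none) :
    t.mate P = ∅ := by
  simp [mate, h]

theorem mate_subset_support (t : TaggedFamily α) (P : Set α) : t.mate P ⊆ t.support := by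
  cases h : t.star P with
  | none => simp [t.mate_eq_empty h]
  | some Q => exact t.mate_eq h ▸ t.subset_support (t.star_ran P Q h)

theorem eq_or_disjoint_mate (t : TaggedFamily α) {P : Set α} (hP : P ∈ t.classes) :
    P = t.mate P ∨ Disjoint P (t.mate P) := by
  cases h : t.star P with
  | none => exact Or.inr (by simp [t.mate_eq_empty h])
  | some Q =>
    rw [t.mate_eq h]
    by_cases hPQ : P = Q
    · exact Or.inl hPQ
    · exact Or.inr ((disjoint_or_nonempty_inter P Q).resolve_right
        (hPQ ∘ t.eq_of_inter P hP Q (t.star_ran P Q h)))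

theorem disjoint_mate (t : TaggedFamily α) (ht : t.NoFixed) {P : Set α} (hP : P ∈ t.classes) :
    Disjoint P (t.mate P) := by
  refine (t.eq_or_disjoint_mate hP).resolve_left fun hPP => ?_
  cases h : t.star P with
  | none =>
    obtain ⟨x, hx⟩ := t.classes_nonempty P hP
    rw [hPP, t.mate_eq_empty h] at hx
    exact hx
  | some Q =>
    have hQP : Q = P := (t.mate_eq h).symm.trans hPP.symm
    exact ht P (hQP ▸ h)

theorem starOrbit_closed (t : TaggedFamily α) {P X Y : Set α} (hXY : t.star X = some Y)
    (hX : X ∈ t.starOrbit P) : Y ∈ t.starOrbit P := by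
  rcases hX with rfl | hPX
  · exact Or.inr hXY
  · exact Or.inl (Option.some_inj.1 ((t.star_invol P X hPX).symm.trans hXY)).symm

theorem restrict_starOrbit (t : TaggedFamily α) {P : Set α} (hP : P ∈ t.classes) :
    t.restrict (t.starOrbit P) = pair P (t.mate P) (t.eq_or_disjoint_mate hP) := by
  have hPne := t.classes_nonempty P hP
  refine ext_of_star_eq_some ?_ fun X Y => ?_
  · ext X
    simp only [classes_restrict, classes_pair, starOrbit, mem_inter_iff, mem_ofPred_eq]
    cases h : t.star P with
    | none =>
      rw [t.mate_eq_empty h]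
      have := t.classes_nonempty X
      grind [Set.not_nonempty_empty]
    | some Q =>
      rw [t.mate_eq h]
      have := t.classes_nonempty X
      have := t.star_ran P Q h
      grind
  · simp only [star_restrict_eq_some, star_pair_eq_some, starOrbit, mem_ofPred_eq]
    cases h : t.star P with
    | none =>
      rw [t.mate_eq_empty h]
      have := t.mem_classes_of_star_eq_some (P := X) (Q := Y)
      grind [Set.not_nonempty_empty]
    | some Q =>
      rw [t.mate_eq h]
      have := t.star_invol P Q h
      have := t.classes_nonempty Q (t.star_ran P Q h)
      grind

theorem noFixed_restrict {t : TaggedFamily α} (ht : t.NoFixed) (D : Set (Set α)) :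
    (t.restrict D).NoFixed := fun P hP => ht P ((star_restrict_eq_some t D).1 hP).1

theorem star_union_of_mem_left {t u : TaggedFamily α} {h hfix} {P : Set α}
    (hP : P ∈ t.classes) : (t.union u h hfix).star P = t.star P :=
  Option.ext fun _ => star_union_eq_some.trans (or_iff_left fun hPQ =>
    ne_of_mem_classes_of_disjoint h hP (u.mem_classes_of_star_eq_some hPQ) rfl)

theorem star_pair_left_eq_some {P R : Set α} {h : P = R ∨ Disjoint P R} {Q : Set α} :
    (pair P R h).star P = some Q ↔ P.Nonempty ∧ R.Nonempty ∧ Q = R := by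
  rw [star_pair_eq_some]
  grind

theorem mate_pair_left {P R : Set α} {h : P = R ∨ Disjoint P R} (hP : P.Nonempty) :
    (pair P R h).mate P = R := by
  rcases R.eq_empty_or_nonempty with rfl | hR
  · simp only [mate, star_pair_left_eq_some, Set.not_nonempty_empty, false_and, and_false,
      ofPred_false, sUnion_empty]
  · simp only [mate, star_pair_left_eq_some, hP, hR, true_and, ofPred_eq_eq_singleton,
      sUnion_singleton]

theorem starOrbit_pair_left {P R : Set α} {h : P = R ∨ Disjoint P R} (hP : P.Nonempty) :
    (pair P R h).starOrbit P = (pair P R h).classes := by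
  ext X
  simp only [starOrbit, classes_pair, star_pair_left_eq_some, mem_ofPred_eq]
  grind

noncomputable def splitClassAndMate {S : Set α} {a : α} (ha : a ∈ S) :
    NoFixedOn S ≃ Σ P : {P : Set α // a ∈ P ∧ P ⊆ S},
      (Σ R : {R : Set α // R ⊆ S \ P}, NoFixedOn ((S \ P) \ R)) where
  toFun t :=
    have hP := t.1.classOf_mem_classes (t.2.1.symm.subset ha)
    ⟨⟨t.1.classOf a, hP.2, (t.1.subset_support hP.1).trans t.2.1.subset⟩,
      ⟨t.1.mate (t.1.classOf a), subset_sdiff.2 ⟨(t.1.mate_subset_support _).trans t.2.1.subset,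
        (t.1.disjoint_mate t.2.2 hP.1).symm⟩⟩,
      ⟨t.1.restrict (t.1.starOrbit (t.1.classOf a))ᶜ, by
        rw [support_restrict_compl, restrict_starOrbit _ hP.1, support_pair, sdiff_sdiff]
        exact congrArg (· \ _) t.2.1,
        noFixed_restrict t.2.2 _⟩⟩
  invFun x := ⟨(pair x.1 x.2.1 (Or.inr (subset_sdiff.1 x.2.1.2).2.symm)).union x.2.2.1
      (by rw [support_pair, x.2.2.2.1, sdiff_sdiff]; exact disjoint_sdiff_right)
      (Or.inr x.2.2.2.2),
    by rw [support_pair_union, x.2.2.2.1, sdiff_sdiff,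
      union_sdiff_cancel (union_subset x.1.2.2 (x.2.1.2.trans sdiff_subset))],
    noFixed_union (noFixed_pair (ne_of_mem_of_not_mem' x.1.2.1 fun ha' => (x.2.1.2 ha').2 x.1.2.1))
      x.2.2.2.2⟩
  left_inv t := by
    apply Subtype.ext
    dsimp only
    exact union_restrict_compl (fun _ _ => t.1.starOrbit_closed)
      (restrict_starOrbit _ (t.1.classOf_mem_classes (t.2.1.symm.subset ha)).1)
  right_inv x := by
    obtain ⟨⟨P, haP, hPS⟩, ⟨R, hR⟩, u, hu, hufix⟩ := x
    dsimp only
    have ext : ∀ {P' R' u'} (hP' : P' = P) (hR' : R' = R) (hu' : u' = u) {h₁ h₂ h₃},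
        (⟨⟨P', h₁⟩, ⟨R', h₂⟩, u', h₃⟩ :
          Σ P : {P : Set α // a ∈ P ∧ P ⊆ S},
            (Σ R : {R : Set α // R ⊆ S \ P}, NoFixedOn ((S \ P) \ R))) =
          ⟨⟨P, haP, hPS⟩, ⟨R, hR⟩, u, hu, hufix⟩ := by
      rintro P' R' u' rfl rfl rfl _ _ _
      rfl
    have hP : P ∈ (pair P R (Or.inr (subset_sdiff.1 hR).2.symm)).classes :=
      ⟨Or.inl rfl, a, haP⟩
    refine ext ?_ ?_ ?_
    · exact classOf_eq _ (Or.inl hP) haP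
    · rw [classOf_eq _ (Or.inl hP) haP, mate, star_union_of_mem_left hP, ← mate,
        mate_pair_left ⟨a, haP⟩]
    · rw [classOf_eq _ (Or.inl hP) haP, starOrbit, star_union_of_mem_left hP, ← starOrbit,
        starOrbit_pair_left ⟨a, haP⟩]
      exact restrict_compl_classes_union

noncomputable def splitClass {S : Set α} {a : α} (ha : a ∈ S) :
    NoFixedOn S ≃ Σ P : {P : Set α // a ∈ P ∧ P ⊆ S}, TaggedOn (S \ P) :=
  (splitClassAndMate ha).trans (Equiv.sigmaCongrRight fun P => (splitFixedClass (S \ P.1)).symm)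

theorem card_noFixedOn_empty : Nat.card (NoFixedOn (∅ : Set α)) = 1 :=
  Nat.card_eq_one_iff_exists.2
    ⟨⟨pair ∅ ∅ (Or.inl rfl), by simp [support_pair], fun P hP => by simp at hP⟩,
      fun t => Subtype.ext (eq_pair_empty_of_support_eq_empty t.2.1)⟩

end TaggedFamily

section SubsetSums

open Finset

open scoped Classical

variable {α : Type*} [Fintype α]

theorem Set.sum_subsets_ncard (S : Set α) (g : ℕ → ℕ) :
    ∑ s : {s : Set α // s ⊆ S}, g s.1.ncard =
      ∑ j ∈ Finset.range (S.ncard + 1), S.ncard.choose j * g j := by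
  let e : {s : Set α // s ⊆ S} ≃ {u : Finset α // u ∈ S.toFinset.powerset} :=
    Equiv.subtypeEquiv Fintype.finsetEquivSet.symm fun s => by simp
  rw [← Fintype.sum_equiv e.symm (fun u => g u.1.card) _ fun u => by
      simp [e, Set.ncard_coe_finset],
    Finset.sum_coe_sort S.toFinset.powerset (fun u => g u.card), sum_powerset_apply_card,
    Set.ncard_eq_toFinset_card']
  simp

theorem Set.sum_subsets_containing {S : Set α} {a : α} (ha : a ∈ S) {m : ℕ}
    (hS : S.ncard = m + 1) (g : ℕ → ℕ) :
    ∑ P : {P : Set α // a ∈ P ∧ P ⊆ S}, g (S \ P).ncard =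
      ∑ k ∈ Finset.range (m + 1), m.choose k * g (m - k) := by
  let e : {P : Set α // a ∈ P ∧ P ⊆ S} ≃ {T : Set α // T ⊆ S \ {a}} :=
    { toFun P := ⟨P.1 \ {a}, sdiff_subset_sdiff_left P.2.2⟩
      invFun T := ⟨insert a T.1, mem_insert a _, insert_subset ha (T.2.trans sdiff_subset)⟩
      left_inv P := Subtype.ext (insert_sdiff_self_of_mem P.2.1)
      right_inv T := Subtype.ext (insert_sdiff_self_of_notMem fun h => (T.2 h).2 rfl) }
  have hm : (S \ {a}).ncard = m := by
    rw [ncard_sdiff (singleton_subset_iff.2 ha), ncard_singleton, hS, Nat.add_sub_cancel]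
  rw [← Fintype.sum_equiv e.symm (fun T => g (m - T.1.ncard)) _ fun T => ?_,
    ← hm, Set.sum_subsets_ncard (S \ {a}) fun j => g ((S \ {a}).ncard - j)]
  change g (m - T.1.ncard) = g (S \ insert a T.1).ncard
  rw [insert_eq, ← sdiff_sdiff, ncard_sdiff T.2, hm]

end SubsetSums

/- `p_n` and `q_n`, through the recursions that `splitFixedClass` and `splitClass`
yield. -/
open Finset in
mutual
def taggedCount : ℕ → ℕ
  | n => ∑ j ∈ range (n + 1), n.choose j * taggedCountNoFixed (n - j)
termination_by n => 2 * n + 1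
decreasing_by omega

def taggedCountNoFixed : ℕ → ℕ
  | 0 => 1
  | n + 1 => ∑ k ∈ range (n + 1), n.choose k * taggedCount (n - k)
termination_by n => 2 * n
decreasing_by omega
end

namespace TaggedFamily

open scoped Classical

variable {α : Type*} [Fintype α]

theorem card_taggedOn_eq_sum (S : Set α) :
    Nat.card (TaggedOn S) = ∑ s : {s : Set α // s ⊆ S}, Nat.card (NoFixedOn (S \ s)) := by
  rw [Nat.card_congr (splitFixedClass S), Nat.card_sigma]

theorem card_noFixedOn_eq_sum {S : Set α} {a : α} (ha : a ∈ S) :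
    Nat.card (NoFixedOn S) =
      ∑ P : {P : Set α // a ∈ P ∧ P ⊆ S}, Nat.card (TaggedOn (S \ P)) := by
  rw [Nat.card_congr (splitClass ha), Nat.card_sigma]

theorem card_taggedOn_of_card_noFixedOn {S : Set α}
    (h : ∀ T ⊆ S, Nat.card (NoFixedOn T) = taggedCountNoFixed T.ncard) :
    Nat.card (TaggedOn S) = taggedCount S.ncard := by
  rw [card_taggedOn_eq_sum, taggedCount,
    ← Set.sum_subsets_ncard S fun j => taggedCountNoFixed (S.ncard - j)]
  exact Finset.sum_congr rfl fun s _ => by rw [h _ sdiff_subset, ncard_sdiff s.2]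

theorem card_noFixedOn (S : Set α) : Nat.card (NoFixedOn S) = taggedCountNoFixed S.ncard := by
  induction hn : S.ncard using Nat.strong_induction_on generalizing S with
  | _ n ih =>
    rcases S.eq_empty_or_nonempty with rfl | ⟨a, ha⟩
    · rw [← hn, ncard_empty, card_noFixedOn_empty, taggedCountNoFixed]
    obtain ⟨m, rfl⟩ : ∃ m, n = m + 1 :=
      Nat.exists_eq_succ_of_ne_zero (hn ▸ ((ncard_pos (toFinite S)).2 ⟨a, ha⟩).ne')
    rw [card_noFixedOn_eq_sum ha, taggedCountNoFixed, ← Set.sum_subsets_containing ha hn]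
    refine Finset.sum_congr rfl fun P _ => card_taggedOn_of_card_noFixedOn fun T hT =>
      ih _ ?_ T rfl
    calc T.ncard ≤ (S \ P).ncard := ncard_le_ncard hT
      _ < S.ncard := ncard_lt_ncard (sdiff_ssubset_left_iff.2 ⟨a, ha, P.2.1⟩)
      _ = m + 1 := hn

theorem card_taggedOn (S : Set α) : Nat.card (TaggedOn S) = taggedCount S.ncard :=
  card_taggedOn_of_card_noFixedOn fun T _ => card_noFixedOn T

end TaggedFamily

def TaggedPartition.equivTaggedOn (n : ℕ) :
    TaggedPartition n ≃ TaggedFamily.TaggedOn (univ : Set (Fin n)) where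
  toFun t := ⟨⟨t.classes, t.classes_nonempty, t.eq_of_inter, t.star, t.star_dom, t.star_ran,
    t.star_invol, t.star_fixed⟩, sUnion_eq_univ_iff.2 t.cover⟩
  invFun t := ⟨t.1.classes, t.1.classes_nonempty, sUnion_eq_univ_iff.1 t.2, t.1.eq_of_inter,
    t.1.star, t.1.star_dom, t.1.star_ran, t.1.star_invol, t.1.star_fixed⟩

theorem TaggedPartition.card_eq_taggedCount (n : ℕ) :
    Nat.card (TaggedPartition n) = taggedCount n := by
  rw [Nat.card_congr (equivTaggedOn n), TaggedFamily.card_taggedOn, ncard_univ, Nat.card_fin]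

namespace PowerSeries

open Finset

noncomputable def egf (f : ℕ → ℕ) : ℚ⟦X⟧ := mk fun n => (f n : ℚ) / n.factorial

@[simp]
theorem coeff_egf (f : ℕ → ℕ) (n : ℕ) : coeff n (egf f) = (f n : ℚ) / n.factorial :=
  coeff_mk _ _

theorem exp_mul_egf (f : ℕ → ℕ) :
    exp ℚ * egf f = egf fun n => ∑ j ∈ range (n + 1), n.choose j * f (n - j) := by
  ext n
  rw [coeff_mul, Nat.sum_antidiagonal_eq_sum_range_succ_mk, coeff_egf, Nat.cast_sum, sum_div]
  refine sum_congr rfl fun j hj => ?_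
  have hjn : j ≤ n := Nat.lt_succ_iff.1 (mem_range.1 hj)
  rw [coeff_exp, coeff_egf, Nat.cast_mul, Nat.cast_choose ℚ hjn]
  simp only [Algebra.algebraMap_self_apply]
  field_simp

theorem derivative_egf (f : ℕ → ℕ) : d⁄dX ℚ (egf f) = egf fun n => f (n + 1) := by
  ext n
  rw [coeff_derivative, coeff_egf, coeff_egf, Nat.factorial_succ, Nat.cast_mul]
  field_simp
  push_cast
  ring

theorem coeff_pow_eq_zero_of_lt {R : Type*} [CommRing R] {A : R⟦X⟧} (hA : constantCoeff A = 0)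
    {n d : ℕ} (h : n < d) : coeff n (A ^ d) = 0 :=
  X_pow_dvd_iff.1 (pow_dvd_pow_of_dvd (X_dvd_iff.2 hA) d) n h

theorem eq_of_derivative_eq_mul {K : Type*} [Field K] [CharZero K] {F G H : K⟦X⟧}
    (hF : d⁄dX K F = H * F) (hG : d⁄dX K G = H * G) (hG0 : constantCoeff G ≠ 0)
    (h0 : constantCoeff F = constantCoeff G) : F = G := by
  have hGinv : G⁻¹ * G = 1 := PowerSeries.inv_mul_cancel G hG0
  have hconst : F * G⁻¹ = 1 := by
    refine derivative.ext ?_ ?_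
    · rw [Derivation.leibniz, derivative_inv', hF, hG, derivative_one, smul_eq_mul, smul_eq_mul]
      linear_combination (-(F * H * G⁻¹)) * hGinv
    · rw [map_mul, constantCoeff_inv, h0, mul_inv_cancel₀ hG0, map_one]
  calc F = F * G⁻¹ * G := by rw [mul_assoc, hGinv, mul_one]
    _ = G := by rw [hconst, one_mul]

end PowerSeries

open PowerSeries

theorem pexp_eq_subst {A : ℚ⟦X⟧} (hA : constantCoeff A = 0) : pexp A = (exp ℚ).subst A := by
  ext n
  rw [coeff_subst' (HasSubst.of_constantCoeff_zero' hA), pexp, coeff_mk,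
    finsum_eq_sum_of_support_subset _ (s := Finset.range (n + 1)) fun d hd => ?_]
  · refine Finset.sum_congr rfl fun d _ => ?_
    simp [coeff_exp, div_eq_inv_mul]
  · by_contra hdn
    simp only [Finset.coe_range, Set.mem_Iio, not_lt] at hdn
    exact hd (by simp only [coeff_pow_eq_zero_of_lt hA hdn, smul_zero])

theorem derivative_pexp {A : ℚ⟦X⟧} (hA : constantCoeff A = 0) :
    d⁄dX ℚ (pexp A) = d⁄dX ℚ A * pexp A := by
  rw [pexp_eq_subst hA, derivative_subst (HasSubst.of_constantCoeff_zero' hA), derivative_exp,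
    mul_comm]

theorem constantCoeff_pexp (A : ℚ⟦X⟧) : constantCoeff (pexp A) = 1 := by
  rw [← coeff_zero_eq_constantCoeff_apply, pexp, coeff_mk]
  simp


theorem taggedCount_zero : taggedCount 0 = 1 := by
  rw [taggedCount, Finset.sum_range_one, taggedCountNoFixed]
  rfl

theorem egf_taggedCount : egf taggedCount = exp ℚ * egf taggedCountNoFixed := by
  rw [exp_mul_egf]
  congr 1
  funext n
  rw [taggedCount]

theorem derivative_egf_taggedCountNoFixed :
    d⁄dX ℚ (egf taggedCountNoFixed) = exp ℚ * egf taggedCount := by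
  rw [derivative_egf, exp_mul_egf]
  congr 1
  funext n
  rw [taggedCountNoFixed]

theorem derivative_egf_taggedCount :
    d⁄dX ℚ (egf taggedCount) = (exp ℚ ^ 2 + 1) * egf taggedCount := by
  calc d⁄dX ℚ (egf taggedCount) = d⁄dX ℚ (exp ℚ * egf taggedCountNoFixed) := by
        rw [egf_taggedCount]
    _ = exp ℚ * (exp ℚ * egf taggedCount) + egf taggedCountNoFixed * exp ℚ := by
        rw [Derivation.leibniz, derivative_exp, derivative_egf_taggedCountNoFixed, smul_eq_mul,
          smul_eq_mul]
    _ = (exp ℚ ^ 2 + 1) * egf taggedCount := by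
        rw [egf_taggedCount]
        ring

/-- Proposition 7.14. The exponential generating function of the
numbers `p_n` of tagged partitions of `{1,…,n}` is `exp((e^{2x} − 1 + 2x)/2)`. -/
theorem egf_taggedPartitions :
    (PowerSeries.mk fun n => (Nat.card (TaggedPartition n) : ℚ) / (Nat.factorial n : ℚ)) =
      pexp ((1 / 2 : ℚ) •
        (PowerSeries.rescale (2 : ℚ) (PowerSeries.exp ℚ) - 1 + 2 * PowerSeries.X)) := by
  have hexp : rescale (2 : ℚ) (exp ℚ) = exp ℚ ^ 2 := by
    rw [exp_pow_eq_rescale_exp]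
    norm_num
  rw [hexp]
  have hA : constantCoeff ((1 / 2 : ℚ) • (exp ℚ ^ 2 - 1 + 2 * X)) = 0 := by
    simp
  have hdA : d⁄dX ℚ ((1 / 2 : ℚ) • (exp ℚ ^ 2 - 1 + 2 * X)) = exp ℚ ^ 2 + 1 := by
    simp only [one_div, two_mul, smul_add, map_add, Derivation.map_smul, map_sub,
      Derivation.leibniz_pow, Nat.add_one_sub_one, pow_one, derivative_exp, smul_eq_mul, ← sq,
      nsmul_eq_mul, Nat.cast_ofNat, Derivation.map_one_eq_zero, sub_zero, derivative_X]
    module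
  simp_rw [TaggedPartition.card_eq_taggedCount]
  refine eq_of_derivative_eq_mul derivative_egf_taggedCount ?_ ?_ ?_
  · rw [derivative_pexp hA, hdA]
  · rw [constantCoeff_pexp]
    exact one_ne_zero
  · rw [constantCoeff_pexp, ← coeff_zero_eq_constantCoeff_apply]
    simp [taggedCount_zero]
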